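/- Let p be an odd prime. Then the automorphism group of the graph C(2;p,2) has order 2^{p+1} · p. -/

import Mathlib

namespace HAT

variable {V : Type*} {W : Type*}

/-- The automorphism group of a simple graph, as a subgroup of the permutation
group of the vertex set. -/
def autSubgroup (X : SimpleGraph V) : Subgroup (Equiv.Perm V) where
  carrier := {g | ∀ u v : V, X.Adj (g u) (g v) ↔ X.Adj u v}
  one_mem' := by intro u v; simp
  mul_mem' := by
    intro a b ha hb u v
    simp only [Equiv.Perm.mul_apply]
    rw [ha, hb]
  inv_mem' := by
    intro a ha u v
    have h := (ha (a⁻¹ u) (a⁻¹ v)).symm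
    simpa using h

/-- A subgroup of the permutation group of the vertex set acts transitively on vertices. -/
def VertexTransitive (G : Subgroup (Equiv.Perm V)) : Prop :=
  ∀ u v : V, ∃ g ∈ G, g u = v

/-- `G` acts transitively on the edges of `X`. -/
def EdgeTransitive (X : SimpleGraph V) (G : Subgroup (Equiv.Perm V)) : Prop :=
  ∀ ⦃u v x y : V⦄, X.Adj u v → X.Adj x y →
    ∃ g ∈ G, (g u = x ∧ g v = y) ∨ (g u = y ∧ g v = x)

/-- `G` acts transitively on the arcs of `X`. -/
def ArcTransitive (X : SimpleGraph V) (G : Subgroup (Equiv.Perm V)) : Prop :=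
  ∀ ⦃u v x y : V⦄, X.Adj u v → X.Adj x y → ∃ g ∈ G, g u = x ∧ g v = y

/-- `G` acts sharply transitively (regularly) on the arcs of `X`. -/
def ArcRegular (X : SimpleGraph V) (G : Subgroup (Equiv.Perm V)) : Prop :=
  ∀ ⦃u v x y : V⦄, X.Adj u v → X.Adj x y →
    ∃! g : G, (g : Equiv.Perm V) u = x ∧ (g : Equiv.Perm V) v = y

/-- `X` is `G`-half-arc-transitive. -/
def HalfArcTransitive (X : SimpleGraph V) (G : Subgroup (Equiv.Perm V)) : Prop :=
  VertexTransitive G ∧ EdgeTransitive X G ∧ ¬ ArcTransitive X G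

/-- `X` is regular of degree `k`. -/
def RegularOfDegree (X : SimpleGraph V) (k : ℕ) : Prop :=
  ∀ v : V, Nat.card (X.neighborSet v) = k

/-- A group of permutations acts semiregularly: all point stabilizers are trivial. -/
def Semiregular (N : Subgroup (Equiv.Perm V)) : Prop :=
  ∀ g ∈ N, (∃ v : V, g v = v) → g = 1

/-- A graph is a Cayley graph iff its automorphism group contains a subgroup
acting regularly (sharply transitively) on the vertices. -/
def IsCayleyGraph (X : SimpleGraph V) : Prop :=
  ∃ H : Subgroup (Equiv.Perm V), H ≤ autSubgroup X ∧
    ∀ u v : V, ∃! h : H, (h : Equiv.Perm V) u = v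

/-- The set of `N`-orbits on the vertex set. -/
abbrev Orbits (N : Subgroup (Equiv.Perm V)) : Type _ := Quotient (MulAction.orbitRel N V)

/-- The `N`-orbit of a vertex. -/
def orbitMk (N : Subgroup (Equiv.Perm V)) (v : V) : Orbits N :=
  Quotient.mk (MulAction.orbitRel N V) v

/-- The quotient graph `X_N`: vertices are the `N`-orbits, two orbits being adjacent
iff some vertex of one is adjacent in `X` to some vertex of the other. -/
def quotientGraph (X : SimpleGraph V) (N : Subgroup (Equiv.Perm V)) :
    SimpleGraph (Orbits N) :=
  SimpleGraph.fromRel (fun B C => ∃ u v : V, orbitMk N u = B ∧ orbitMk N v = C ∧ X.Adj u v)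

/-- `X` is an `N`-regular covering of the quotient graph `X_N`: `N` is semiregular and
the orbit projection maps each neighbourhood bijectively onto the neighbourhood of the
corresponding orbit. -/
def IsRegularCover (X : SimpleGraph V) (N : Subgroup (Equiv.Perm V)) : Prop :=
  Semiregular N ∧
    ∀ v : V, Set.BijOn (orbitMk N) (X.neighborSet v)
      ((quotientGraph X N).neighborSet (orbitMk N v))

/-- The permutations of the orbit set induced by elements of `G` (this is the image of
the natural action of `G/N` when `N` is normal in `G`). -/
def inducedQuotSubgroup (G N : Subgroup (Equiv.Perm V)) :
    Subgroup (Equiv.Perm (Orbits N)) where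
  carrier := {σ | ∃ g ∈ G, ∀ u : V, σ (orbitMk N u) = orbitMk N (g u)}
  one_mem' := ⟨1, G.one_mem, fun u => by simp⟩
  mul_mem' := by
    rintro σ τ ⟨g, hg, hgs⟩ ⟨h, hh, hhs⟩
    refine ⟨g * h, G.mul_mem hg hh, fun u => ?_⟩
    simp [Equiv.Perm.mul_apply, hhs u, hgs (h u)]
  inv_mem' := by
    rintro σ ⟨g, hg, hgs⟩
    refine ⟨g⁻¹, G.inv_mem hg, fun u => ?_⟩
    have h1 := hgs (g⁻¹ u)
    rw [show g (g⁻¹ u) = u from g.apply_symm_apply u] at h1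
    rw [← h1]
    exact σ.symm_apply_apply _

/-- A voltage assignment on the arcs of `Y` with values in the group `K`. -/
def IsVoltage (Y : SimpleGraph W) (K : Type*) [Group K] (ξ : W → W → K) : Prop :=
  ∀ u v : W, Y.Adj u v → ξ v u = (ξ u v)⁻¹

/-- The derived graph `Y ×_ξ K` of a voltage assignment `ξ`. -/
def derivedGraph (Y : SimpleGraph W) {K : Type*} [Group K] (ξ : W → W → K) :
    SimpleGraph (W × K) :=
  SimpleGraph.fromRel (fun a b => Y.Adj a.1 b.1 ∧ b.2 = ξ a.1 b.1 * a.2)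

/-- The graph `X(r; m, n)`: vertices `Z_m × Z_n`, with `(i,j)` adjacent to
`(i+1, j ± r^i)`. -/
def XG (m : ℕ) {n : ℕ} (r : (ZMod n)ˣ) : SimpleGraph (ZMod m × ZMod n) :=
  SimpleGraph.fromRel (fun a b =>
    b.1 = a.1 + 1 ∧
      (b.2 = a.2 + (r : ZMod n) ^ (a.1.val) ∨ b.2 = a.2 - (r : ZMod n) ^ (a.1.val)))

/-- The Praeger–Xu graph `C(2;p,2)`: vertices `Z_p × Z_2 × Z_2`, with `(i,(x,y))`
adjacent to `(i+1,(y,z))`. -/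
def Cp22 (p : ℕ) : SimpleGraph (ZMod p × ZMod 2 × ZMod 2) :=
  SimpleGraph.fromRel (fun a b => b.1 = a.1 + 1 ∧ b.2.1 = a.2.2)

/-- The lexicographic product `C_n[2K_1]`: vertices `Z_n × Z_2`, with `(i,x)`
adjacent to `(j,y)` iff `j = i ± 1`. -/
def cyc2K1 (n : ℕ) : SimpleGraph (ZMod n × ZMod 2) :=
  SimpleGraph.fromRel (fun a b => b.1 = a.1 + 1)

/-- The wreath graph `W(6,2)`: vertices `Z_6 × Z_2`, with `(i,x)` adjacent to `(i+1,y)`. -/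
def W62 : SimpleGraph (ZMod 6 × ZMod 2) :=
  SimpleGraph.fromRel (fun a b => b.1 = a.1 + 1)

/-- Base relation for the Rose Window graph `R_6(5,4)`: `inl i` is `S_i`, `inr i` is `Q_i`. -/
def roseR : (ZMod 6 ⊕ ZMod 6) → (ZMod 6 ⊕ ZMod 6) → Prop
  | Sum.inl i, Sum.inl j => j = i + 1
  | Sum.inl i, Sum.inr j => j = i ∨ i = j + 5
  | Sum.inr i, Sum.inr j => j = i + 4
  | Sum.inr _, Sum.inl _ => False

/-- The Rose Window graph `R_6(5,4)`. -/
def roseWindow : SimpleGraph (ZMod 6 ⊕ ZMod 6) := SimpleGraph.fromRel roseR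

/-- An elementary abelian `q`-group. -/
def IsElementaryAbelian (q : ℕ) (H : Type*) [Group H] : Prop :=
  (∀ a b : H, a * b = b * a) ∧ ∀ x : H, x ≠ 1 → orderOf x = q

/-!
Automorphisms preserve the relation "having at least two common neighbours". Since `p ∤ 4`,
two vertices in different columns have at most one common neighbour, and inside a column
`{i} × Z₂²` the relation links vertices sharing a coordinate; so the columns are exactly the
classes of its two-step closure and every automorphism permutes them, along an automorphism
`i ↦ k ± i` of the `p`-cycle. Composing with `rot k 0` or `reflect k 0` leaves an automorphism
fixing every column; the adjacency `(i, x, y) ~ (i + 1, y, z)` then forces it to translate the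
coordinate shared by columns `i` and `i + 1` by some `ε i`, i.e. it is `rot 0 ε`. Hence the
automorphisms are the `2 · p · 2 ^ p` maps `rot k ε`, `reflect k ε`.
-/

section AutSubgroup

variable {X : SimpleGraph V} {g : Equiv.Perm V}

theorem map_adj_iff_of_mem_autSubgroup (hg : g ∈ autSubgroup X) (u v : V) :
    X.Adj (g u) (g v) ↔ X.Adj u v :=
  hg u v

theorem commonNeighbors_apply_of_mem_autSubgroup (hg : g ∈ autSubgroup X) (u v : V) :
    X.commonNeighbors (g u) (g v) = g '' X.commonNeighbors u v := by
  ext w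
  obtain ⟨w, rfl⟩ := g.surjective w
  rw [g.injective.mem_set_image, SimpleGraph.mem_commonNeighbors,
    SimpleGraph.mem_commonNeighbors, hg, hg]

theorem commonNeighbors_nontrivial_apply_iff (hg : g ∈ autSubgroup X) (u v : V) :
    (X.commonNeighbors (g u) (g v)).Nontrivial ↔ (X.commonNeighbors u v).Nontrivial := by
  rw [commonNeighbors_apply_of_mem_autSubgroup hg, Set.image_nontrivial g.injective]

end AutSubgroup

theorem ZMod.eq_add_or_eq_sub_of_injective {p : ℕ} [NeZero p] (h2 : (2 : ZMod p) ≠ 0)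
    {c : ZMod p → ZMod p} (hc : Function.Injective c)
    (hstep : ∀ i, c (i + 1) = c i + 1 ∨ c i = c (i + 1) + 1) :
    (∀ i, c i = c 0 + i) ∨ (∀ i, c i = c 0 - i) := by
  have hstep0 : c 1 = c 0 + 1 ∨ c 0 = c 1 + 1 := by simpa using hstep 0
  -- a change of direction would give `c (n + 2) = c n`
  have hdiff : ∀ n : ℕ, c (n + 1) - c n = c 1 - c 0 := by
    intro n
    induction n with
    | zero => simp
    | succ n ih =>
      have hback : c ((n : ZMod p) + 1 + 1) ≠ c n := fun h =>
        h2 (by linear_combination hc h)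
      push_cast
      rcases hstep0 with h0 | h0 <;> rcases hstep ((n : ZMod p) + 1) with h | h
      · linear_combination h - h0
      · exact absurd (by linear_combination ih - h + h0) hback
      · exact absurd (by linear_combination h + ih - h0) hback
      · linear_combination h0 - h
  have hnat : ∀ n : ℕ, c n = c 0 + n * (c 1 - c 0) := by
    intro n
    induction n with
    | zero => simp
    | succ n ih => push_cast; linear_combination hdiff n + ih
  have hc' : ∀ i, c i = c 0 + i * (c 1 - c 0) := fun i => by
    obtain ⟨n, rfl⟩ := ZMod.natCast_zmod_surjective i
    exact hnat n
  rcases hstep0 with h0 | h0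
  · exact Or.inl fun i => by linear_combination hc' i + i * h0
  · exact Or.inr fun i => by linear_combination hc' i - i * h0

theorem ZMod.two_apply_eq_add {f : ZMod 2 → ZMod 2} (hf : f 0 ≠ f 1) (y : ZMod 2) :
    f y = y + f 0 := by
  revert y f; decide

theorem two_ne_zero_of_four_ne_zero {R : Type*} [NonAssocSemiring R] (h4 : (4 : R) ≠ 0) :
    (2 : R) ≠ 0 := fun h => h4 (by rw [← two_add_two_eq_four, h, add_zero])

theorem one_ne_zero_of_two_ne_zero {R : Type*} [NonAssocSemiring R] (h2 : (2 : R) ≠ 0) :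
    (1 : R) ≠ 0 := fun h => h2 (by rw [← one_add_one_eq_two, h, zero_add])

namespace Cp22

variable {p : ℕ}

def Arc (u v : ZMod p × ZMod 2 × ZMod 2) : Prop :=
  v.1 = u.1 + 1 ∧ v.2.1 = u.2.2

theorem adj_iff (h1 : (1 : ZMod p) ≠ 0) {u v : ZMod p × ZMod 2 × ZMod 2} :
    (Cp22 p).Adj u v ↔ Arc u v ∨ Arc v u := by
  refine ⟨fun h => h.2, fun h => ⟨?_, h⟩⟩
  rintro rfl
  rcases h with ⟨h, -⟩ | ⟨h, -⟩ <;> exact h1 (by linear_combination -h)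

/-- Vertex `(i, x, y)` is the edge `(i, x) — (i + 1, y)` of `C_p[2K_1]`; `rot k ε` and
`reflect k ε` are induced by the automorphisms `(j, a) ↦ (j + k, a + ε (j - 1))` and
`(j, a) ↦ (k + 1 - j, a + ε (j - 1))` of `C_p[2K_1]`. -/
def rot (k : ZMod p) (ε : ZMod p → ZMod 2) : Equiv.Perm (ZMod p × ZMod 2 × ZMod 2) where
  toFun v := (v.1 + k, v.2.1 + ε (v.1 - 1), v.2.2 + ε v.1)
  invFun v := (v.1 - k, v.2.1 + ε (v.1 - k - 1), v.2.2 + ε (v.1 - k))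
  left_inv v := by simp [add_assoc, CharTwo.add_self_eq_zero]
  right_inv v := by simp [add_assoc, CharTwo.add_self_eq_zero]

def reflect (k : ZMod p) (ε : ZMod p → ZMod 2) : Equiv.Perm (ZMod p × ZMod 2 × ZMod 2) where
  toFun v := (k - v.1, v.2.2 + ε v.1, v.2.1 + ε (v.1 - 1))
  invFun v := (k - v.1, v.2.2 + ε (k - v.1 - 1), v.2.1 + ε (k - v.1))
  left_inv v := by simp [add_assoc, CharTwo.add_self_eq_zero]
  right_inv v := by simp [add_assoc, CharTwo.add_self_eq_zero]

variable {k : ZMod p} {ε : ZMod p → ZMod 2} {u v w : ZMod p × ZMod 2 × ZMod 2}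

@[simp] theorem rot_apply : rot k ε v = (v.1 + k, v.2.1 + ε (v.1 - 1), v.2.2 + ε v.1) := rfl

@[simp] theorem reflect_apply : reflect k ε v = (k - v.1, v.2.2 + ε v.1, v.2.1 + ε (v.1 - 1)) :=
  rfl

@[simp] theorem fst_rot_symm_apply : ((rot k ε).symm v).1 = v.1 - k := rfl

@[simp] theorem fst_reflect_symm_apply : ((reflect k ε).symm v).1 = k - v.1 := rfl

theorem arc_rot_iff : Arc (rot k ε u) (rot k ε v) ↔ Arc u v := by
  have hfst : v.1 + k = u.1 + k + 1 ↔ v.1 = u.1 + 1 := by rw [add_right_comm, add_left_inj]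
  simp only [Arc, rot_apply, hfst]
  refine and_congr_right fun h => ?_
  rw [h, add_sub_cancel_right, add_left_inj]

theorem arc_reflect_iff : Arc (reflect k ε u) (reflect k ε v) ↔ Arc v u := by
  have hfst : k - v.1 = k - u.1 + 1 ↔ u.1 = v.1 + 1 :=
    ⟨fun h => by linear_combination h, fun h => by linear_combination h⟩
  simp only [Arc, reflect_apply, hfst]
  refine and_congr_right fun h => ?_
  rw [h, add_sub_cancel_right, add_left_inj, eq_comm]

theorem rot_mem (h1 : (1 : ZMod p) ≠ 0) (k : ZMod p) (ε : ZMod p → ZMod 2) :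
    rot k ε ∈ autSubgroup (Cp22 p) := fun u v => by
  simp only [adj_iff h1, arc_rot_iff]

theorem reflect_mem (h1 : (1 : ZMod p) ≠ 0) (k : ZMod p) (ε : ZMod p → ZMod 2) :
    reflect k ε ∈ autSubgroup (Cp22 p) := fun u v => by
  rw [adj_iff h1, adj_iff h1, arc_reflect_iff, arc_reflect_iff, or_comm]

theorem rot_mul_rot_zero (k : ZMod p) (ε : ZMod p → ZMod 2) : rot k 0 * rot 0 ε = rot k ε := by
  ext v <;> simp

theorem reflect_mul_rot_zero (k : ZMod p) (ε : ZMod p → ZMod 2) :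
    reflect k 0 * rot 0 ε = reflect k ε := by
  ext v <;> simp

theorem mem_commonNeighbors_cases (h1 : (1 : ZMod p) ≠ 0)
    (hw : w ∈ (Cp22 p).commonNeighbors u v) :
    (u.1 = v.1 ∧ (u.2.1 = v.2.1 ∨ u.2.2 = v.2.2)) ∨
      (v.1 = u.1 + 2 ∧ w = (u.1 + 1, u.2.2, v.2.1)) ∨
      (u.1 = v.1 + 2 ∧ w = (v.1 + 1, v.2.2, u.2.1)) := by
  obtain ⟨hu, hv⟩ := (SimpleGraph.mem_commonNeighbors _).mp hw
  rw [adj_iff h1] at hu hv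
  obtain ⟨i, x, y⟩ := w
  rcases hu with ⟨hu1, hu2⟩ | ⟨hu1, hu2⟩ <;>
    rcases hv with ⟨hv1, hv2⟩ | ⟨hv1, hv2⟩ <;> dsimp only at hu1 hu2 hv1 hv2
  · exact Or.inl ⟨by linear_combination hv1 - hu1, Or.inr (hu2.symm.trans hv2)⟩
  · exact Or.inr (Or.inl ⟨by linear_combination hv1 + hu1, by rw [hu1, hu2, hv2]⟩)
  · exact Or.inr (Or.inr ⟨by linear_combination hu1 + hv1, by rw [hv1, hv2, hu2]⟩)
  · exact Or.inl ⟨hu1.trans hv1.symm, Or.inl (hu2.trans hv2.symm)⟩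

theorem commonNeighbors_nontrivial_iff (h4 : (4 : ZMod p) ≠ 0) :
    ((Cp22 p).commonNeighbors u v).Nontrivial ↔
      u.1 = v.1 ∧ (u.2.1 = v.2.1 ∨ u.2.2 = v.2.2) := by
  have h1 := one_ne_zero_of_two_ne_zero (two_ne_zero_of_four_ne_zero h4)
  constructor
  · rintro ⟨w, hw, w', hw', hne⟩
    rcases mem_commonNeighbors_cases h1 hw with h | ⟨hvu, rfl⟩ | ⟨huv, rfl⟩
    · exact h
    all_goals rcases mem_commonNeighbors_cases h1 hw' with h | ⟨hvu', rfl⟩ | ⟨huv', rfl⟩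
    all_goals first
      | exact h
      | exact absurd rfl hne
      | exact absurd (by linear_combination -hvu - huv') h4
      | exact absurd (by linear_combination -huv - hvu') h4
  · rintro ⟨hfst, hx | hy⟩
    · refine ⟨(u.1 - 1, 0, u.2.1), ?_, (u.1 - 1, 1, u.2.1), ?_, by simp⟩ <;>
        exact (SimpleGraph.mem_commonNeighbors _).mpr
          ⟨(adj_iff h1).mpr (Or.inr ⟨by ring, rfl⟩),
            (adj_iff h1).mpr (Or.inr ⟨by rw [← hfst]; ring, hx.symm⟩)⟩
    · refine ⟨(u.1 + 1, u.2.2, 0), ?_, (u.1 + 1, u.2.2, 1), ?_, by simp⟩ <;>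
        exact (SimpleGraph.mem_commonNeighbors _).mpr
          ⟨(adj_iff h1).mpr (Or.inl ⟨rfl, rfl⟩),
            (adj_iff h1).mpr (Or.inl ⟨by rw [hfst], hy⟩)⟩

theorem fst_eq_iff_exists (h4 : (4 : ZMod p) ≠ 0) :
    u.1 = v.1 ↔ ∃ w, ((Cp22 p).commonNeighbors u w).Nontrivial ∧
      ((Cp22 p).commonNeighbors w v).Nontrivial := by
  simp only [commonNeighbors_nontrivial_iff h4]
  refine ⟨fun h => ⟨(u.1, u.2.1, v.2.2), ⟨rfl, Or.inl rfl⟩, ⟨h, Or.inr rfl⟩⟩, ?_⟩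
  rintro ⟨w, ⟨h, -⟩, ⟨h', -⟩⟩
  exact h.trans h'

variable {g : Equiv.Perm (ZMod p × ZMod 2 × ZMod 2)}

theorem fst_apply_eq_iff (h4 : (4 : ZMod p) ≠ 0) (hg : g ∈ autSubgroup (Cp22 p)) :
    (g u).1 = (g v).1 ↔ u.1 = v.1 := by
  rw [fst_eq_iff_exists h4, fst_eq_iff_exists h4, g.surjective.exists]
  simp only [commonNeighbors_nontrivial_apply_iff hg]

theorem exists_fst_apply_eq [NeZero p] (h4 : (4 : ZMod p) ≠ 0)
    (hg : g ∈ autSubgroup (Cp22 p)) :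
    ∃ k, (∀ u, (g u).1 = k + u.1) ∨ (∀ u, (g u).1 = k - u.1) := by
  have h2 := two_ne_zero_of_four_ne_zero h4
  have h1 := one_ne_zero_of_two_ne_zero h2
  let c : ZMod p → ZMod p := fun i => (g (i, 0, 0)).1
  have hgc : ∀ u, (g u).1 = c u.1 := fun u => (fst_apply_eq_iff h4 hg).mpr rfl
  have hinj : c.Injective := fun i j h => (fst_apply_eq_iff h4 hg).mp h
  have hstep : ∀ i, c (i + 1) = c i + 1 ∨ c i = c (i + 1) + 1 := fun i => by
    have hadj := (map_adj_iff_of_mem_autSubgroup hg (i, 0, 0) (i + 1, 0, 0)).mpr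
      ((adj_iff h1).mpr (Or.inl ⟨rfl, rfl⟩))
    exact ((adj_iff h1).mp hadj).imp And.left And.left
  refine ⟨c 0, ?_⟩
  rcases ZMod.eq_add_or_eq_sub_of_injective h2 hinj hstep with h | h
  · exact Or.inl fun u => (hgc u).trans (h u.1)
  · exact Or.inr fun u => (hgc u).trans (h u.1)

theorem exists_eq_rot_zero (h2 : (2 : ZMod p) ≠ 0) (hg : g ∈ autSubgroup (Cp22 p))
    (hfst : ∀ u, (g u).1 = u.1) : ∃ ε, g = rot 0 ε := by
  have h1 := one_ne_zero_of_two_ne_zero h2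
  have harc : ∀ {u w}, Arc u w → (g w).2.1 = (g u).2.2 := by
    intro u w huw
    have hadj := (map_adj_iff_of_mem_autSubgroup hg u w).mpr ((adj_iff h1).mpr (Or.inl huw))
    rcases (adj_iff h1).mp hadj with h | ⟨h, -⟩
    · exact h.2
    · rw [hfst, hfst, huw.1] at h
      exact absurd (by linear_combination -h) h2
  let f : ZMod p → ZMod 2 → ZMod 2 := fun i y => (g (i, 0, y)).2.2
  have hsnd : ∀ i x y, (g (i, x, y)).2.2 = f i y := fun i x y =>
    (harc (w := (i + 1, y, 0)) ⟨rfl, rfl⟩).symm.trans (harc ⟨rfl, rfl⟩)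
  have hfst' : ∀ i x y, (g (i, x, y)).2.1 = f (i - 1) x := fun i x y =>
    harc ⟨(sub_add_cancel i 1).symm, rfl⟩
  have hg_eq : ∀ i x y, g (i, x, y) = (i, f (i - 1) x, f i y) := fun i x y =>
    Prod.ext (hfst _) (Prod.ext (hfst' i x y) (hsnd i x y))
  have hf : ∀ i, f i 0 ≠ f i 1 := fun i h => by
    have := g.injective ((hg_eq i 0 0).trans (by rw [h]) |>.trans (hg_eq i 0 1).symm)
    simp at this
  refine ⟨fun i => f i 0, Equiv.ext fun ⟨i, x, y⟩ => ?_⟩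
  rw [hg_eq, rot_apply, ZMod.two_apply_eq_add (hf (i - 1)) x,
    ZMod.two_apply_eq_add (hf i) y, add_zero]

theorem mem_autSubgroup_iff [NeZero p] (h4 : (4 : ZMod p) ≠ 0) :
    g ∈ autSubgroup (Cp22 p) ↔ ∃ k ε, g = rot k ε ∨ g = reflect k ε := by
  have h2 := two_ne_zero_of_four_ne_zero h4
  have h1 := one_ne_zero_of_two_ne_zero h2
  constructor
  · intro hg
    obtain ⟨k, hrot | hrefl⟩ := exists_fst_apply_eq h4 hg
    · obtain ⟨ε, hε⟩ := exists_eq_rot_zero h2 (mul_mem (inv_mem (rot_mem h1 k 0)) hg)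
        fun u => by simp [hrot]
      exact ⟨k, ε, Or.inl (by rw [← rot_mul_rot_zero, ← hε, mul_inv_cancel_left])⟩
    · obtain ⟨ε, hε⟩ := exists_eq_rot_zero h2 (mul_mem (inv_mem (reflect_mem h1 k 0)) hg)
        fun u => by simp [hrefl]
      exact ⟨k, ε, Or.inr (by rw [← reflect_mul_rot_zero, ← hε, mul_inv_cancel_left])⟩
  · rintro ⟨k, ε, rfl | rfl⟩
    exacts [rot_mem h1 k ε, reflect_mem h1 k ε]

def ofParams : Bool × ZMod p × (ZMod p → ZMod 2) → Equiv.Perm (ZMod p × ZMod 2 × ZMod 2)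
  | (false, k, ε) => rot k ε
  | (true, k, ε) => reflect k ε

theorem ofParams_injective (h2 : (2 : ZMod p) ≠ 0) : Function.Injective (ofParams (p := p)) := by
  rintro ⟨b, k, ε⟩ ⟨b', k', ε'⟩ h
  have h0 := congrArg Prod.fst (Equiv.congr_fun h (0, 0, 0))
  have h1 := congrArg Prod.fst (Equiv.congr_fun h (1, 0, 0))
  have hε := fun i => congrArg Prod.snd (Equiv.congr_fun h (i, 0, 0))
  cases b <;> cases b' <;>
    simp only [ofParams, rot_apply, reflect_apply, zero_add, zero_sub, sub_zero, sub_self,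
      add_right_inj, sub_left_inj, Prod.mk.injEq] at h0 h1 hε
  · simp [h0, funext fun i => (hε i).2]
  · exact absurd (by linear_combination h1 - h0) h2
  · exact absurd (by linear_combination h0 - h1) h2
  · simp [h0, funext fun i => (hε i).1]

theorem range_ofParams [NeZero p] (h4 : (4 : ZMod p) ≠ 0) :
    Set.range ofParams =
      (autSubgroup (Cp22 p) : Set (Equiv.Perm (ZMod p × ZMod 2 × ZMod 2))) := by
  ext g
  rw [SetLike.mem_coe, mem_autSubgroup_iff h4]
  constructor
  · rintro ⟨⟨_ | _, k, ε⟩, rfl⟩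
    exacts [⟨k, ε, Or.inl rfl⟩, ⟨k, ε, Or.inr rfl⟩]
  · rintro ⟨k, ε, rfl | rfl⟩
    exacts [⟨(false, k, ε), rfl⟩, ⟨(true, k, ε), rfl⟩]

theorem card_autSubgroup [NeZero p] (h4 : (4 : ZMod p) ≠ 0) :
    Nat.card (autSubgroup (Cp22 p)) = 2 * p * 2 ^ p := by
  rw [← SetLike.coe_sort_coe, ← range_ofParams h4,
    Nat.card_range_of_injective (ofParams_injective (two_ne_zero_of_four_ne_zero h4))]
  simp [mul_assoc]

end Cp22

theorem ZMod.four_ne_zero_of_odd {p : ℕ} (hodd : Odd p) (hp : p ≠ 1) : (4 : ZMod p) ≠ 0 := by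
  intro h
  have hdvd : p ∣ 2 ^ 2 := by
    exact_mod_cast (ZMod.natCast_eq_zero_iff _ _).mp (by exact_mod_cast h)
  exact hp (Nat.Coprime.eq_one_of_dvd (hodd.coprime_two_right.pow_right 2) hdvd)

/-- For an odd prime `p`, the automorphism group of `C(2;p,2)`
has order `2^(p+1) · p`. -/
theorem stmt15 (p : ℕ) (hp : p.Prime) (hodd : Odd p) :
    Nat.card ↥(autSubgroup (Cp22 p)) = 2 ^ (p + 1) * p := by
  have : NeZero p := ⟨hodd.pos.ne'⟩
  rw [Cp22.card_autSubgroup (ZMod.four_ne_zero_of_odd hodd hp.ne_one)]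
  ring

end HAT
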